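/- Let R be a finite ring with identity having at least one nonzero idempotent and at least one unit. Then Cl₂(R) is isomorphic to Shu^t_n(I(R)), where t = |{u ∈ U(R) : u² = 1}| and n = |U(R)|. -/

import Mathlib

/-!
Enumerate the units so that the `t` self-inverse ones come first and every remaining pair
`{u, u⁻¹}` occupies positions `i` and `n + t - 1 - i`: this is possible because inversion is an
involution with `t` fixed points, so its other orbits have size two. Sending `(e, u)` to the copy
of `e` indexed by `u`, with the idempotent `1` as the new vertex `z`, is then a graph isomorphism:
orthogonality of nonzero idempotents is the `I(R)`-part of the shuriken adjacency (orthogonal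
nonzero idempotents are distinct and different from `1`), and `uv = 1` is exactly the relation
between the copies.
-/

/-- The `(t,n)`-shuriken graph of `G` (with `1`-indexed copies `1,…,n` of the
paper encoded as `Fin n`, `0`-indexed). A new vertex `z` (encoded `none`) is
added to `G`, and `n` copies are taken. Edges: copies of edges of `G` across
all pairs of copies; all edges within copy `i` for `i ≤ t`; and all edges
between copies `i` and `n + t + 1 - i` for `t + 1 ≤ i ≤ (n + t)/2`. -/
def Shu (t n : ℕ) {V : Type*} (G : SimpleGraph V) :
    SimpleGraph (Fin n × Option V) where
  Adj x y :=
    (∃ u v, x.2 = some u ∧ y.2 = some v ∧ G.Adj u v) ∨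
    (x.1 = y.1 ∧ x.1.val < t ∧ x.2 ≠ y.2) ∨
    (x.1 ≠ y.1 ∧ x.1.val + y.1.val = n + t - 1 ∧ t ≤ x.1.val ∧ t ≤ y.1.val)
  symm := by
    constructor
    rintro x y (⟨u, v, h1, h2, h3⟩ | ⟨h1, h2, h3⟩ | ⟨h1, h2, h3, h4⟩)
    · exact Or.inl ⟨v, u, h2, h1, h3.symm⟩
    · exact Or.inr (Or.inl ⟨h1.symm, h1 ▸ h2, h3.symm⟩)
    · exact Or.inr (Or.inr ⟨h1.symm, by omega, h4, h3⟩)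
  loopless := by
    constructor
    rintro x (⟨u, v, h1, h2, h3⟩ | ⟨h1, h2, h3⟩ | ⟨h1, h2, h3⟩)
    · rw [h1] at h2
      injection h2 with h
      exact G.loopless.irrefl u (h ▸ h3)
    · exact h3 rfl
    · exact h1 rfl

/-- The clean graph `Cl₂(R)`. -/
def Cl2 (R : Type*) [Ring R] :
    SimpleGraph ({e : R // e ^ 2 = e ∧ e ≠ 0} × Rˣ) where
  Adj x y := x ≠ y ∧
    ((x.1.1 * y.1.1 = 0 ∧ y.1.1 * x.1.1 = 0) ∨ (x.2 * y.2 = 1 ∧ y.2 * x.2 = 1))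
  symm := by
    constructor
    rintro x y ⟨hne, h⟩
    exact ⟨hne.symm, by tauto⟩
  loopless := by constructor; rintro x ⟨hne, -⟩; exact hne rfl

/-- The idempotent graph `I(R)`: vertices are the nontrivial idempotents, with
`e`, `f` adjacent iff `ef = fe = 0`. -/
def IdemGraph (R : Type*) [Ring R] :
    SimpleGraph {e : R // e ^ 2 = e ∧ e ≠ 0 ∧ e ≠ 1} where
  Adj e f := e.1 * f.1 = 0 ∧ f.1 * e.1 = 0
  symm := by constructor; rintro e f ⟨h1, h2⟩; exact ⟨h2, h1⟩
  loopless := by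
    constructor
    rintro ⟨e, he, he0, he1⟩ ⟨h1, -⟩
    exact he0 (by rw [← he, sq, h1])

open Function

/-- The relation between the copies in `Shu t n G`; the paper's `n + t + 1 - i` becomes
`n + t - 1 - i` in `0`-indexing. -/
def ShuMatched (t n : ℕ) (i j : Fin n) : Prop :=
  (i = j ∧ (i : ℕ) < t) ∨ (i ≠ j ∧ (i : ℕ) + j = n + t - 1 ∧ t ≤ (i : ℕ) ∧ t ≤ (j : ℕ))

theorem shu_adj_iff {t n : ℕ} {V : Type*} {G : SimpleGraph V} {x y : Fin n × Option V} :
    (Shu t n G).Adj x y ↔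
      (∃ u v, x.2 = some u ∧ y.2 = some v ∧ G.Adj u v) ∨ (x ≠ y ∧ ShuMatched t n x.1 y.1) := by
  obtain ⟨i, a⟩ := x
  obtain ⟨j, b⟩ := y
  simp only [Shu, ShuMatched, ne_eq, Prod.mk.injEq]
  by_cases h : i = j <;> simp [h, and_comm]

namespace Function.Involutive

variable {α : Type*} {f : α → α}

theorem exists_sum_equiv (hf : Involutive f) (hfix : ∀ a, f a ≠ a) :
    ∃ (P : Set α) (e : P ⊕ P ≃ α), ∀ p, e p.swap = f (e p) := by
  classical
  let := linearOrderOfSTO (WellOrderingRel (α := α))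
  let P : Set α := {a | a < f a}
  have hP : ∀ a, a ∈ P ↔ f a ∉ P := fun a => by
    simp only [P, Set.mem_ofPred_eq, hf a, not_lt]
    exact ⟨le_of_lt, fun h => h.lt_of_ne (hfix a).symm⟩
  let φ : P ≃ {a // a ∉ P} := Equiv.subtypeEquiv (hf.toPerm f) hP
  refine ⟨P, (Equiv.sumCongr (.refl P) φ).trans (Equiv.sumCompl (· ∈ P)), ?_⟩
  rintro (p | p)
  exacts [rfl, (hf p).symm]

theorem exists_equiv_fin_rev [Finite α] (hf : Involutive f) (hfix : ∀ a, f a ≠ a) :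
    ∃ e : α ≃ Fin (Nat.card α), ∀ a, e (f a) = (e a).rev := by
  obtain ⟨P, e, he⟩ := hf.exists_sum_equiv hfix
  obtain ⟨m, ⟨eP⟩⟩ : ∃ m, Nonempty (P ≃ Fin m) := ⟨_, ⟨Finite.equivFin P⟩⟩
  let r : P ⊕ P ≃ Fin (m + m) :=
    (Equiv.sumCongr eP (eP.trans Fin.revPerm)).trans finSumFinEquiv
  have hr : ∀ p, r p.swap = (r p).rev := by
    rintro (p | p) <;> ext <;> simp only [r, Sum.swap_inl, Sum.swap_inr, Equiv.trans_apply,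
      Equiv.sumCongr_apply, Sum.map_inl, Sum.map_inr, Equiv.coe_trans, comp_apply, Fin.revPerm_apply,
      finSumFinEquiv_apply_left, finSumFinEquiv_apply_right, Fin.natAdd_eq_addNat, Fin.val_addNat,
      Fin.val_castAdd, Fin.val_rev] <;> omega
  have hcard : m + m = Nat.card α := by
    rw [← Nat.card_congr e, Nat.card_sum, Nat.card_congr eP, Nat.card_fin]
  refine ⟨e.symm.trans (r.trans (finCongr hcard)), fun a => ?_⟩
  obtain ⟨p, rfl⟩ := e.surjective a
  ext
  simp [← he, hr, hcard]

theorem exists_equiv_fin [Finite α] (hf : Involutive f) :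
    ∃ e : α ≃ Fin (Nat.card α), ∀ a,
      ((e a : ℕ) < Nat.card (fixedPoints f) ↔ f a = a) ∧
      (f a ≠ a → (e a : ℕ) + e (f a) = Nat.card α + Nat.card (fixedPoints f) - 1) := by
  classical
  let T := {a // a ∉ fixedPoints f}
  let fT : Equiv.Perm T := (hf.toPerm f).subtypePerm fun a => by
    simp [IsFixedPt, hf a, eq_comm]
  obtain ⟨eT, heT⟩ := exists_equiv_fin_rev (f := fT) (fun a => Subtype.ext (hf a))
    fun a h => a.2 (congrArg Subtype.val h)
  let E : α ≃ Fin (Nat.card (fixedPoints f) + Nat.card T) :=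
    (Equiv.sumCompl (· ∈ fixedPoints f)).symm.trans
      ((Equiv.sumCongr (Finite.equivFin _) eT).trans finSumFinEquiv)
  have hE_fixed (a) (ha : a ∈ fixedPoints f) :
      (E a : ℕ) = Finite.equivFin (fixedPoints f) ⟨a, ha⟩ := by
    simp only [E, Equiv.trans_apply, Equiv.sumCompl_symm_apply_of_pos ha, Equiv.sumCongr_apply,
      Sum.map_inl, finSumFinEquiv_apply_left, Fin.val_castAdd]
  have hE_moved (a) (ha : a ∉ fixedPoints f) :
      (E a : ℕ) = Nat.card (fixedPoints f) + eT ⟨a, ha⟩ := by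
    simp only [E, Equiv.trans_apply, Equiv.sumCompl_symm_apply_of_neg ha, Equiv.sumCongr_apply,
      Sum.map_inr, finSumFinEquiv_apply_right, Fin.val_natAdd]
  have hcard : Nat.card (fixedPoints f) + Nat.card T = Nat.card α := by
    rw [← Nat.card_sum, Nat.card_congr (Equiv.sumCompl _)]
  refine ⟨E.trans (finCongr hcard), fun a => ?_⟩
  simp only [Equiv.trans_apply, finCongr_apply, Fin.val_cast]
  by_cases ha : a ∈ fixedPoints f
  · rw [hE_fixed a ha]
    exact ⟨⟨fun _ => ha, fun _ => Fin.is_lt _⟩, fun h => absurd ha h⟩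
  · have hfa : f a ∉ fixedPoints f := (fT ⟨a, ha⟩).2
    have hrev : eT ⟨f a, hfa⟩ = (eT ⟨a, ha⟩).rev := heT ⟨a, ha⟩
    have := (eT ⟨a, ha⟩).is_lt
    rw [hE_moved a ha, hE_moved (f a) hfa, hrev, Fin.val_rev]
    exact ⟨⟨fun h => absurd h (by omega), fun h => absurd h ha⟩, fun _ => by omega⟩

theorem exists_equiv_fin_shuMatched_iff [Finite α] (hf : Involutive f) :
    ∃ e : α ≃ Fin (Nat.card α), ∀ a b,
      ShuMatched (Nat.card (fixedPoints f)) (Nat.card α) (e a) (e b) ↔ b = f a := by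
  obtain ⟨e, he⟩ := hf.exists_equiv_fin
  refine ⟨e, fun a b => ⟨?_, ?_⟩⟩
  · rintro (⟨hab, ha⟩ | ⟨-, hab, ha, -⟩)
    · rw [← e.injective hab, (he a).1.1 ha]
    · have hfa : f a ≠ a := fun h => by have := (he a).1.2 h; omega
      have := (he a).2 hfa
      exact e.injective (Fin.ext (by omega))
  · rintro rfl
    by_cases hfa : f a = a
    · exact Or.inl ⟨by rw [hfa], (he a).1.2 hfa⟩
    · have hffa : f (f a) ≠ f a := by rwa [hf a, ne_comm]
      refine Or.inr ⟨e.injective.ne (Ne.symm hfa), (he a).2 hfa, ?_, ?_⟩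
      · exact not_lt.1 fun h => hfa ((he a).1.1 h)
      · exact not_lt.1 fun h => hffa ((he (f a)).1.1 h)

end Function.Involutive

theorem exists_equiv_fin_shuMatched_iff_mul_eq_one (G : Type*) [Group G] [Finite G] :
    ∃ e : G ≃ Fin (Nat.card G), ∀ u v,
      ShuMatched (Nat.card {u : G // u ^ 2 = 1}) (Nat.card G) (e u) (e v) ↔ u * v = 1 := by
  have hcard : Nat.card (fixedPoints (Inv.inv : G → G)) = Nat.card {u : G // u ^ 2 = 1} :=
    Nat.card_congr <| Equiv.subtypeEquivRight fun u => by
      rw [mem_fixedPoints, IsFixedPt, inv_eq_iff_mul_eq_one, sq]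
  obtain ⟨e, he⟩ := (inv_involutive (G := G)).exists_equiv_fin_shuMatched_iff
  exact ⟨e, fun u v => by rw [← hcard, he, eq_comm, inv_eq_iff_mul_eq_one]⟩

theorem cl2_adj_iff {R : Type*} [Ring R] {x y : {e : R // e ^ 2 = e ∧ e ≠ 0} × Rˣ} :
    (Cl2 R).Adj x y ↔
      (x.1.1 * y.1.1 = 0 ∧ y.1.1 * x.1.1 = 0) ∨ (x ≠ y ∧ x.2 * y.2 = 1) := by
  have hne : x.1.1 * y.1.1 = 0 → x ≠ y := by
    rintro h rfl
    exact x.1.2.2 (by rw [← x.1.2.1, sq, h])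
  simp only [Cl2, mul_eq_one_comm (a := y.2)]
  constructor
  · rintro ⟨hxy, h | h⟩
    exacts [Or.inl h, Or.inr ⟨hxy, h.1⟩]
  · rintro (h | h)
    exacts [⟨hne h.1, Or.inl h⟩, ⟨h.1, Or.inr ⟨h.2, h.2⟩⟩]

section Idempotents

variable (R : Type*) [Ring R] [Nontrivial R] [DecidableEq R]

/-- The idempotent `1` plays the role of the new vertex `z` of the shuriken graph. -/
def idemOptionEquiv :
    {e : R // e ^ 2 = e ∧ e ≠ 0} ≃ Option {e : R // e ^ 2 = e ∧ e ≠ 0 ∧ e ≠ 1} :=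
  (Equiv.optionSubtypeNe ⟨1, one_pow 2, one_ne_zero⟩).symm.trans <| Equiv.optionCongr
    { toFun := fun x => ⟨x.1.1, x.1.2.1, x.1.2.2, fun h => x.2 (Subtype.ext h)⟩
      invFun := fun e => ⟨⟨e.1, e.2.1, e.2.2.1⟩, fun h => e.2.2.2 (congrArg Subtype.val h)⟩
      left_inv := fun _ => rfl
      right_inv := fun _ => rfl }

theorem val_eq_of_idemOptionEquiv_eq_some {x : {e : R // e ^ 2 = e ∧ e ≠ 0}}
    {a : {e : R // e ^ 2 = e ∧ e ≠ 0 ∧ e ≠ 1}} (h : idemOptionEquiv R x = some a) :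
    x.1 = a.1 := by
  rw [← Equiv.eq_symm_apply] at h
  rw [h]
  rfl

theorem idemOptionEquiv_of_ne_one {x : {e : R // e ^ 2 = e ∧ e ≠ 0}} (hx : x.1 ≠ 1) :
    idemOptionEquiv R x = some ⟨x.1, x.2.1, x.2.2, hx⟩ := by
  rw [idemOptionEquiv, Equiv.trans_apply,
    Equiv.optionSubtypeNe_symm_of_ne fun h => hx (congrArg Subtype.val h)]
  rfl

theorem exists_idemOptionEquiv_eq_some_adj_iff {x y : {e : R // e ^ 2 = e ∧ e ≠ 0}} :
    (∃ a b, idemOptionEquiv R x = some a ∧ idemOptionEquiv R y = some b ∧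
      (IdemGraph R).Adj a b) ↔ x.1 * y.1 = 0 ∧ y.1 * x.1 = 0 := by
  constructor
  · rintro ⟨a, b, ha, hb, hab⟩
    rwa [val_eq_of_idemOptionEquiv_eq_some R ha, val_eq_of_idemOptionEquiv_eq_some R hb]
  · rintro ⟨hxy, hyx⟩
    have hx : x.1 ≠ 1 := fun hx => y.2.2 (by rw [← one_mul y.1, ← hx, hxy])
    have hy : y.1 ≠ 1 := fun hy => x.2.2 (by rw [← one_mul x.1, ← hy, hyx])
    exact ⟨_, _, idemOptionEquiv_of_ne_one R hx, idemOptionEquiv_of_ne_one R hy, hxy, hyx⟩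

end Idempotents

theorem stmt_18_general {R : Type*} [Ring R] [Fintype R]
    (hid : ∃ e : R, e ^ 2 = e ∧ e ≠ 0) :
    Nonempty
      (Cl2 R ≃g
        Shu (Nat.card {u : Rˣ // u ^ 2 = 1}) (Nat.card Rˣ) (IdemGraph R)) := by
  classical
  obtain ⟨e, -, he⟩ := hid
  have : Nontrivial R := ⟨⟨e, 0, he⟩⟩
  obtain ⟨σ, hσ⟩ := exists_equiv_fin_shuMatched_iff_mul_eq_one Rˣ
  let Φ := (Equiv.prodComm _ _).trans (σ.prodCongr (idemOptionEquiv R))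
  refine ⟨⟨Φ, fun {x y} => ?_⟩⟩
  rw [shu_adj_iff, cl2_adj_iff, Φ.injective.ne_iff]
  exact or_congr (exists_idemOptionEquiv_eq_some_adj_iff R) (and_congr_right fun _ => hσ x.2 y.2)

theorem stmt_18 {R : Type*} [Ring R] [Fintype R]
    (hid : ∃ e : R, e ^ 2 = e ∧ e ≠ 0) (hu : Nonempty Rˣ) :
    Nonempty
      (Cl2 R ≃g
        Shu (Nat.card {u : Rˣ // u ^ 2 = 1}) (Nat.card Rˣ) (IdemGraph R)) :=
  stmt_18_general hid
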